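/- arXiv:1712.06188 — 9 statements merged into one kernel-verified Lean document; each statement's English description precedes it below -/
import Mathlib

section
/- The function f is concave on [0,1]. -/
/-!
Write `D x = x - η w(x)`, which is positive on `(0, 1]` since `η < 0 ≤ w`. On `(0, 1)` the
function `f = exp (-∫_x^1 D⁻¹)` has `f' = f / D` and `f'' = f (1 - D') / D² = f η w' / D²`, which is
nonpositive as `w' ≥ 0` (`w` is monotone). Together with continuity on `[0, 1]` this gives concavity.
-/

open Real Set Filter Topology

section
variable {g D : ℝ → ℝ} {a b x D' : ℝ}

theorem MonotoneOn.deriv_nonneg_of_mem_nhds {s : Set ℝ} (hg : MonotoneOn g s) (hs : s ∈ 𝓝 x) :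
    0 ≤ deriv g x := by
  rw [← derivWithin_of_mem_nhds hs]
  exact hg.derivWithin_nonneg

theorem hasDerivAt_integral_of_continuousOn_Ioc (hg : ContinuousOn g (Ioc a b))
    (hx : x ∈ Ioo a b) : HasDerivAt (fun y => ∫ t in y..b, g t) (-g x) x := by
  have hIoo : Ioo a b ∈ 𝓝 x := Ioo_mem_nhds hx.1 hx.2
  have hsub : uIcc x b ⊆ Ioc a b := by
    rw [uIcc_of_le hx.2.le]
    exact fun y hy => ⟨hx.1.trans_le hy.1, hy.2⟩
  exact intervalIntegral.integral_hasDerivAt_left (hg.mono hsub).intervalIntegrable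
    ⟨Ioo a b, hIoo, (hg.mono Ioo_subset_Ioc_self).aestronglyMeasurable measurableSet_Ioo⟩
    ((hg.mono Ioo_subset_Ioc_self).continuousAt hIoo)

theorem hasDerivAt_exp_neg_integral (hg : ContinuousOn g (Ioc a b)) (hx : x ∈ Ioo a b) :
    HasDerivAt (fun y => exp (-∫ t in y..b, g t)) (exp (-∫ t in x..b, g t) * g x) x := by
  simpa using (hasDerivAt_integral_of_continuousOn_Ioc hg hx).neg.exp

theorem hasDerivAt_exp_neg_integral_inv_mul_inv (hD : ContinuousOn D (Ioc a b))
    (hD0 : ∀ y ∈ Ioc a b, D y ≠ 0) (hx : x ∈ Ioo a b) (hDx : HasDerivAt D D' x) :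
    HasDerivAt (fun y => exp (-∫ t in y..b, (D t)⁻¹) * (D y)⁻¹)
      (exp (-∫ t in x..b, (D t)⁻¹) * (1 - D') / D x ^ 2) x := by
  have hDx0 : D x ≠ 0 := hD0 x (Ioo_subset_Ioc_self hx)
  refine ((hasDerivAt_exp_neg_integral (hD.inv₀ hD0) hx).mul (hDx.inv hDx0)).congr_deriv ?_
  simp only [Pi.inv_apply]
  field_simp
  ring

end

theorem crushdown_f_concave_general
    (η : ℝ) (hη : η < 0) (w : ℝ → ℝ)
    (hwnn : ∀ x ∈ Icc (0:ℝ) 1, 0 ≤ w x)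
    (hwC1 : ContDiffOn ℝ 1 w (Icc 0 1))
    (hwmono : MonotoneOn w (Icc 0 1))
    (f : ℝ → ℝ)
    (hf : ∀ x : ℝ, f x = if x = 0 then 0
      else Real.exp (-(∫ b in x..1, (b - η * w b)⁻¹)))
    (hcont : ContinuousOn f (Icc 0 1)) :
    ConcaveOn ℝ (Icc 0 1) f := by
  set D : ℝ → ℝ := fun x => x - η * w x
  set F : ℝ → ℝ := fun x => ∫ t in x..1, (D t)⁻¹
  have hD_pos : ∀ x ∈ Ioc (0:ℝ) 1, 0 < D x := fun x hx => by
    nlinarith [hwnn x (Ioc_subset_Icc_self hx), hx.1]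
  have hD_cont : ContinuousOn D (Ioc 0 1) :=
    continuousOn_id.sub (continuousOn_const.mul (hwC1.continuousOn.mono Ioc_subset_Icc_self))
  have hw_deriv : ∀ x ∈ Ioo (0:ℝ) 1, HasDerivAt w (deriv w x) x := fun x hx =>
    ((hwC1.differentiableOn one_ne_zero x (Ioo_subset_Icc_self hx)).differentiableAt
      (Icc_mem_nhds hx.1 hx.2)).hasDerivAt
  refine concaveOn_of_hasDerivWithinAt2_nonpos (convex_Icc 0 1) hcont
    (f' := fun x => exp (-F x) * (D x)⁻¹) (f'' := fun x => exp (-F x) * (η * deriv w x) / D x ^ 2)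
    (fun x hx => ?_) (fun x hx => ?_) (fun x hx => ?_)
  all_goals rw [interior_Icc] at hx
  · refine (hasDerivAt_exp_neg_integral (hD_cont.inv₀ fun y hy => (hD_pos y hy).ne') hx
      |>.congr_of_eventuallyEq ?_).hasDerivWithinAt
    filter_upwards [Ioo_mem_nhds hx.1 hx.2] with y hy
    rw [hf y, if_neg hy.1.ne']
    rfl
  · have hDx : HasDerivAt D (1 - η * deriv w x) x :=
      (hasDerivAt_id x).sub ((hw_deriv x hx).const_mul η)
    simpa only [sub_sub_cancel] using (hasDerivAt_exp_neg_integral_inv_mul_inv hD_cont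
      (fun y hy => (hD_pos y hy).ne') hx hDx).hasDerivWithinAt
  · have hηw' : η * deriv w x ≤ 0 := mul_nonpos_of_nonpos_of_nonneg hη.le
      (hwmono.deriv_nonneg_of_mem_nhds (Icc_mem_nhds hx.1 hx.2))
    exact div_nonpos_of_nonpos_of_nonneg (mul_nonpos_of_nonneg_of_nonpos (exp_nonneg _) hηw')
      (sq_nonneg _)

theorem crushdown_f_concave
    (η : ℝ) (hη : η < 0) (w : ℝ → ℝ)
    (hw0 : w 0 = 0) (hw1 : w 1 = 1)
    (hwnn : ∀ x ∈ Icc (0:ℝ) 1, 0 ≤ w x)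
    (hwC1 : ContDiffOn ℝ 1 w (Icc 0 1))
    (hwmono : MonotoneOn w (Icc 0 1))
    (f : ℝ → ℝ)
    (hf : ∀ x : ℝ, f x = if x = 0 then 0
      else Real.exp (-(∫ b in x..1, (b - η * w b)⁻¹)))
    (hcont : ContinuousOn f (Icc 0 1)) :
    ConcaveOn ℝ (Icc 0 1) f :=
  crushdown_f_concave_general η hη w hwnn hwC1 hwmono f hf hcont
end

section
/- If the derivative f'(0) (from the right) exists, then f' is continuous on [0,1], i.e., lim_{x→0⁺} f'(x) = f'(0). -/
/-!
On `(0, 1)` the logarithmic derivative of `f` is `1 / (x - η w x)`, so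
`f' x = (f x / x) / (1 - η · w x / x)`. As `x → 0⁺`, `f x / x → f'(0)` and `w x / x → w'(0) ≥ 0`,
hence `f'` has the limit `f'(0) / (1 - η w'(0))`. A function whose derivative has a limit at
an endpoint is differentiable there with that limit as its one-sided derivative, so this limit
is `f'(0)` itself.
-/

open Real Set Filter Topology

theorem HasDerivWithinAt.eq_of_tendsto_deriv_nhdsGT {f : ℝ → ℝ} {a L l : ℝ}
    (hL : HasDerivWithinAt f L (Ici a) a) (hdiff : ∀ᶠ x in 𝓝[>] a, DifferentiableAt ℝ f x)
    (hlim : Tendsto (deriv f) (𝓝[>] a) (𝓝 l)) : l = L := by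
  have hs : {x | DifferentiableAt ℝ f x} ∩ Ioi a ∈ 𝓝[>] a := inter_mem hdiff self_mem_nhdsWithin
  have hl : HasDerivWithinAt f l (Ici a) a :=
    hasDerivWithinAt_Ici_of_tendsto_deriv (fun x hx => hx.1.differentiableWithinAt)
      (hL.continuousWithinAt.mono (inter_subset_right.trans Ioi_subset_Ici_self)) hs hlim
  exact (uniqueDiffWithinAt_Ici a).eq_deriv _ hl hL

theorem HasDerivWithinAt.tendsto_div_nhdsGT_zero {f : ℝ → ℝ} {L : ℝ}
    (h : HasDerivWithinAt f L (Ioi 0) 0) (h0 : f 0 = 0) :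
    Tendsto (fun x => f x / x) (𝓝[>] 0) (𝓝 L) := by
  refine ((hasDerivWithinAt_iff_tendsto_slope' (lt_irrefl 0)).mp h).congr fun x => ?_
  simp [slope_def_field, h0]

theorem hasDerivAt_exp_neg_integral_s5 {g : ℝ → ℝ} {x c : ℝ}
    (hint : IntervalIntegrable g MeasureTheory.volume x c)
    (hmeas : StronglyMeasurableAtFilter g (𝓝 x)) (hg : ContinuousAt g x) :
    HasDerivAt (fun u => exp (-∫ b in u..c, g b)) (exp (-∫ b in x..c, g b) * g x) x := by
  simpa using (intervalIntegral.integral_hasDerivAt_left hint hmeas hg).neg.exp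

theorem hasDerivAt_of_eventuallyEq_exp_neg_integral {f g : ℝ → ℝ} {a c x : ℝ}
    (hg : ContinuousOn g (Ioc a c)) (hx : x ∈ Ioo a c)
    (hf : f =ᶠ[𝓝 x] fun u => exp (-∫ b in u..c, g b)) : HasDerivAt f (f x * g x) x := by
  have hint : IntervalIntegrable g MeasureTheory.volume x c :=
    (hg.mono fun b hb => ⟨hx.1.trans_le hb.1, hb.2⟩).intervalIntegrable_of_Icc hx.2.le
  have hgIoo : ContinuousOn g (Ioo a c) := hg.mono Ioo_subset_Ioc_self
  rw [hf.eq_of_nhds]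
  exact (hasDerivAt_exp_neg_integral_s5 hint
    (hgIoo.stronglyMeasurableAtFilter isOpen_Ioo x hx)
    (hgIoo.continuousAt (isOpen_Ioo.mem_nhds hx))).congr_of_eventuallyEq hf

theorem tendsto_mul_inv_sub_mul_nhdsGT_zero {f w : ℝ → ℝ} {η L d : ℝ}
    (hf : Tendsto (fun x => f x / x) (𝓝[>] 0) (𝓝 L))
    (hw : Tendsto (fun x => w x / x) (𝓝[>] 0) (𝓝 d)) (hd : 1 - η * d ≠ 0) :
    Tendsto (fun x => f x * (x - η * w x)⁻¹) (𝓝[>] 0) (𝓝 (L * (1 - η * d)⁻¹)) := by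
  refine (hf.mul ((tendsto_const_nhds.sub (tendsto_const_nhds.mul hw)).inv₀ hd)).congr' ?_
  filter_upwards [self_mem_nhdsWithin] with x (hx : 0 < x)
  rw [mul_div_assoc', one_sub_div hx.ne', inv_div, div_mul_div_cancel₀ hx.ne', div_eq_mul_inv]

theorem crushdown_f_deriv_continuous_at_zero_general
    (η : ℝ) (hη : η < 0) (w : ℝ → ℝ)
    (hw0 : w 0 = 0)
    (hwnn : ∀ x ∈ Icc (0:ℝ) 1, 0 ≤ w x)
    (hwC1 : ContDiffOn ℝ 1 w (Icc 0 1))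
    (f : ℝ → ℝ)
    (hf : ∀ x : ℝ, f x = if x = 0 then 0
      else Real.exp (-(∫ b in x..1, (b - η * w b)⁻¹)))
    (L : ℝ) (hL : HasDerivWithinAt f L (Ici 0) 0) :
    Filter.Tendsto (fun x : ℝ => derivWithin f (Icc 0 1) x)
      (nhdsWithin 0 (Ioi 0)) (nhds L) := by
  have hden : ∀ x ∈ Ioc (0:ℝ) 1, x - η * w x ≠ 0 := fun x hx => by
    nlinarith [hwnn x (Ioc_subset_Icc_self hx), hx.1]
  have hg : ContinuousOn (fun b => (b - η * w b)⁻¹) (Ioc 0 1) :=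
    (continuousOn_id.sub (continuousOn_const.mul
      (hwC1.continuousOn.mono Ioc_subset_Icc_self))).inv₀ hden
  have hderiv : ∀ x ∈ Ioo (0:ℝ) 1, HasDerivAt f (f x * (x - η * w x)⁻¹) x := fun x hx =>
    hasDerivAt_of_eventuallyEq_exp_neg_integral hg hx <| by
      filter_upwards [eventually_ne_nhds hx.1.ne'] with u hu using (hf u).trans (if_neg hu)
  obtain ⟨d, hwd⟩ : ∃ d, HasDerivWithinAt w d (Icc 0 1) 0 :=
    ⟨_, (hwC1.differentiableOn one_ne_zero 0 ⟨le_rfl, zero_le_one⟩).hasDerivWithinAt⟩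
  have hw_slope := (hwd.mono_of_mem_nhdsWithin (Icc_mem_nhdsGT one_pos)).tendsto_div_nhdsGT_zero hw0
  have hd : 0 ≤ d := ge_of_tendsto hw_slope <| by
    filter_upwards [Ioc_mem_nhdsGT one_pos] with x hx
    exact div_nonneg (hwnn x (Ioc_subset_Icc_self hx)) hx.1.le
  have hf_slope := hL.Ioi_of_Ici.tendsto_div_nhdsGT_zero (by simp [hf])
  have hIoo : Ioo (0:ℝ) 1 ∈ 𝓝[>] 0 := Ioo_mem_nhdsGT one_pos
  have hderiv_lim : Tendsto (deriv f) (𝓝[>] 0) (𝓝 (L * (1 - η * d)⁻¹)) :=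
    (tendsto_mul_inv_sub_mul_nhdsGT_zero hf_slope hw_slope (by nlinarith)).congr' <| by
      filter_upwards [hIoo] with x hx using (hderiv x hx).deriv.symm
  rw [← hL.eq_of_tendsto_deriv_nhdsGT (by
    filter_upwards [hIoo] with x hx using (hderiv x hx).differentiableAt) hderiv_lim]
  refine hderiv_lim.congr' ?_
  filter_upwards [hIoo] with x hx using (derivWithin_of_mem_nhds (Icc_mem_nhds hx.1 hx.2)).symm

theorem crushdown_f_deriv_continuous_at_zero
    (η : ℝ) (hη : η < 0) (w : ℝ → ℝ)
    (hw0 : w 0 = 0) (hw1 : w 1 = 1)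
    (hwnn : ∀ x ∈ Icc (0:ℝ) 1, 0 ≤ w x)
    (hwC1 : ContDiffOn ℝ 1 w (Icc 0 1))
    (hwmono : MonotoneOn w (Icc 0 1))
    (f : ℝ → ℝ)
    (hf : ∀ x : ℝ, f x = if x = 0 then 0
      else Real.exp (-(∫ b in x..1, (b - η * w b)⁻¹)))
    (L : ℝ) (hL : HasDerivWithinAt f L (Ici 0) 0) :
    Filter.Tendsto (fun x : ℝ => derivWithin f (Icc 0 1) x)
      (nhdsWithin 0 (Ioi 0)) (nhds L) :=
  crushdown_f_deriv_continuous_at_zero_general η hη w hw0 hwnn hwC1 f hf L hL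
end

section
/- If f'(0) exists, then w'(0) = 0. -/
/-!
If `w'(0) = c > 0`, then `w b ≥ (c/2) b` near `0`, so the integrand satisfies
`1 / (b - η w b) ≤ 1 / (m b)` with `m = 1 - η c / 2 > 1`. Integrating gives
`f x ≥ C x ^ (1/m)`, hence `f x / x ≥ C x ^ (1/m - 1) → ∞` as `x → 0⁺`, contradicting the
existence of `f'(0)`. Monotonicity of `w` gives `c ≥ 0`, and makes the integrand antitone, hence
integrable, on every `[x, 1]` with `x > 0`.
-/

open Real Set Filter Topology MeasureTheory

lemma intervalIntegrable_inv_of_monotoneOn {D : ℝ → ℝ} {a b : ℝ} (hD : MonotoneOn D (uIcc a b))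
    (hpos : ∀ t ∈ uIcc a b, 0 < D t) : IntervalIntegrable (fun t ↦ (D t)⁻¹) volume a b :=
  AntitoneOn.intervalIntegrable fun _ hs _ ht hst ↦ inv_anti₀ (hpos _ hs) (hD hs ht hst)

lemma integral_le_inv_mul_log_add {g : ℝ → ℝ} {m x d : ℝ} (hx : 0 < x) (hxd : x ≤ d)
    (hg : ∀ b ∈ Icc x d, g b ≤ (m * b)⁻¹)
    (hx1 : IntervalIntegrable g volume x 1) (hd1 : IntervalIntegrable g volume d 1) :
    ∫ b in x..1, g b ≤ m⁻¹ * log (d / x) + ∫ b in d..1, g b := by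
  have hxd_int : IntervalIntegrable g volume x d := hx1.trans hd1.symm
  have hinv_int : IntervalIntegrable (fun b ↦ m⁻¹ * b⁻¹) volume x d :=
    (intervalIntegral.intervalIntegrable_inv (fun b hb ↦ by
      rw [uIcc_of_le hxd] at hb; exact (hx.trans_le hb.1).ne') continuousOn_id).const_mul _
  have hxd_le : ∫ b in x..d, g b ≤ m⁻¹ * log (d / x) := by
    rw [← integral_inv_of_pos hx (hx.trans_le hxd), ← intervalIntegral.integral_const_mul]
    refine intervalIntegral.integral_mono_on hxd hxd_int hinv_int fun b hb ↦ ?_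
    simpa only [mul_inv] using hg b hb
  rw [← intervalIntegral.integral_add_adjacent_intervals hxd_int hd1]
  linarith

lemma tendsto_exp_neg_integral_div_atTop {g : ℝ → ℝ} {m : ℝ} (hm : 1 < m)
    (hg : ∀ᶠ b in 𝓝[>] 0, g b ≤ (m * b)⁻¹)
    (hint : ∀ᶠ x in 𝓝[>] 0, IntervalIntegrable g volume x 1) :
    Tendsto (fun x ↦ exp (-∫ b in x..1, g b) / x) (𝓝[>] 0) atTop := by
  obtain ⟨d, hd, hsub⟩ := mem_nhdsGT_iff_exists_Ioc_subset.1 (hg.and hint)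
  have hd : 0 < d := hd
  set K := m⁻¹ * log d + ∫ b in d..1, g b
  have hlower : ∀ x ∈ Ioc 0 d, exp ((1 - m⁻¹) * -log x - K) ≤ exp (-∫ b in x..1, g b) / x := by
    intro x hx
    have hbound := integral_le_inv_mul_log_add (g := g) hx.1 hx.2
      (fun b hb ↦ (hsub ⟨hx.1.trans_le hb.1, hb.2⟩).1) (hsub hx).2 (hsub ⟨hd, le_rfl⟩).2
    rw [log_div hd.ne' hx.1.ne'] at hbound
    rw [div_eq_mul_inv, ← exp_log (inv_pos.2 hx.1), log_inv, ← exp_add, exp_le_exp]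
    linarith
  have hexp : Tendsto (fun x ↦ exp ((1 - m⁻¹) * -log x - K)) (𝓝[>] 0) atTop :=
    tendsto_exp_atTop.comp <| tendsto_atTop_add_const_right _ _ <|
      (tendsto_neg_atBot_atTop.comp tendsto_log_nhdsGT_zero).const_mul_atTop
        (sub_pos.2 (inv_lt_one_of_one_lt₀ hm))
  refine tendsto_atTop_mono' _ ?_ hexp
  filter_upwards [Ioc_mem_nhdsGT hd] with x hx using hlower x hx

lemma eventually_lt_slope_of_hasDerivWithinAt {w : ℝ → ℝ} {s : Set ℝ} {a c k : ℝ}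
    (hw : HasDerivWithinAt w c s a) (hs : s ∈ 𝓝[>] a) (hk : k < c) :
    ∀ᶠ b in 𝓝[>] a, k < slope w a b :=
  (hasDerivWithinAt_iff_tendsto_slope' (lt_irrefl a)).1 (hw.mono_of_mem_nhdsWithin hs)
    (isOpen_Ioi.mem_nhds hk)

section Integrand

variable {η : ℝ} {w : ℝ → ℝ}

lemma inv_sub_mul_le_inv_mul (hη : η ≤ 0) {b k : ℝ} (hb : 0 < b) (hk : 0 ≤ k)
    (hkw : k * b ≤ w b) : (b - η * w b)⁻¹ ≤ ((1 - η * k) * b)⁻¹ :=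
  inv_anti₀ (mul_pos (by nlinarith) hb) (by nlinarith)

lemma intervalIntegrable_inv_sub_mul (hη : η ≤ 0) (hwnn : ∀ x ∈ Icc (0:ℝ) 1, 0 ≤ w x)
    (hwmono : MonotoneOn w (Icc 0 1)) {x : ℝ} (hx : x ∈ Ioc 0 1) :
    IntervalIntegrable (fun b ↦ (b - η * w b)⁻¹) volume x 1 := by
  have hsub : uIcc x 1 ⊆ Icc 0 1 := by
    rw [uIcc_of_le hx.2]; exact Icc_subset_Icc_left hx.1.le
  refine intervalIntegrable_inv_of_monotoneOn (fun s hs t ht hst ↦ ?_) fun t ht ↦ ?_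
  · nlinarith [hwmono (hsub hs) (hsub ht) hst]
  · have := hwnn t (hsub ht)
    rw [uIcc_of_le hx.2] at ht
    nlinarith [hx.1.trans_le ht.1]

end Integrand

theorem crushdown_w_deriv_zero_general
    (η : ℝ) (hη : η < 0) (w : ℝ → ℝ)
    (hw0 : w 0 = 0)
    (hwnn : ∀ x ∈ Icc (0:ℝ) 1, 0 ≤ w x)
    (hwmono : MonotoneOn w (Icc 0 1))
    (f : ℝ → ℝ)
    (hf : ∀ x : ℝ, f x = if x = 0 then 0
      else Real.exp (-(∫ b in x..1, (b - η * w b)⁻¹)))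
    (L : ℝ) (hL : HasDerivWithinAt f L (Ici 0) 0) :
    derivWithin w (Icc 0 1) 0 = 0 := by
  by_cases hdiff : DifferentiableWithinAt ℝ w (Icc 0 1) 0
  swap
  · exact derivWithin_zero_of_not_differentiableWithinAt hdiff
  set c := derivWithin w (Icc 0 1) 0
  refine le_antisymm (not_lt.1 fun hc ↦ ?_) hwmono.derivWithin_nonneg
  have hbound : ∀ᶠ b in 𝓝[>] 0, (b - η * w b)⁻¹ ≤ ((1 - η * (c / 2)) * b)⁻¹ := by
    filter_upwards [eventually_lt_slope_of_hasDerivWithinAt hdiff.hasDerivWithinAt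
      (Icc_mem_nhdsGT zero_lt_one) (half_lt_self hc), self_mem_nhdsWithin] with b hb (hb0 : 0 < b)
    rw [slope_def_field, hw0, sub_zero, sub_zero, lt_div_iff₀ hb0] at hb
    exact inv_sub_mul_le_inv_mul hη.le hb0 (by positivity) hb.le
  have hint : ∀ᶠ x in 𝓝[>] 0, IntervalIntegrable (fun b ↦ (b - η * w b)⁻¹) volume x 1 := by
    filter_upwards [Ioc_mem_nhdsGT zero_lt_one] with x hx
    exact intervalIntegrable_inv_sub_mul hη.le hwnn hwmono hx
  have hf_slope : Tendsto (slope f 0) (𝓝[>] 0) (𝓝 L) :=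
    (hasDerivWithinAt_iff_tendsto_slope' (lt_irrefl 0)).1 hL.Ioi_of_Ici
  refine not_tendsto_atTop_of_tendsto_nhds hf_slope <|
    (tendsto_exp_neg_integral_div_atTop (by nlinarith) hbound hint).congr' ?_
  filter_upwards [self_mem_nhdsWithin] with x (hx : 0 < x)
  rw [slope_def_field, hf x, hf 0, if_neg hx.ne', if_pos rfl, sub_zero, sub_zero]

theorem crushdown_w_deriv_zero
    (η : ℝ) (hη : η < 0) (w : ℝ → ℝ)
    (hw0 : w 0 = 0) (hw1 : w 1 = 1)
    (hwnn : ∀ x ∈ Icc (0:ℝ) 1, 0 ≤ w x)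
    (hwC1 : ContDiffOn ℝ 1 w (Icc 0 1))
    (hwmono : MonotoneOn w (Icc 0 1))
    (f : ℝ → ℝ)
    (hf : ∀ x : ℝ, f x = if x = 0 then 0
      else Real.exp (-(∫ b in x..1, (b - η * w b)⁻¹)))
    (L : ℝ) (hL : HasDerivWithinAt f L (Ici 0) 0) :
    derivWithin w (Icc 0 1) 0 = 0 :=
  crushdown_w_deriv_zero_general η hη w hw0 hwnn hwmono f hf L hL
end

section
/- If there exist ν > 1 and δ > 0 such that w(x) ≤ x^ν for all x ∈ [0,δ], then f'(0) exists (equivalently, f(x)/(x - η·w(x)) is bounded near 0; in particular for w(x) ≤ x^ν on all of [0,1] one has f(x)/(x-η·w(x)) ≤ ((1-η)/(1-η·x^{ν-1}))^{1/(ν-1)}). -/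
/-!
With `φ b = (b - η w b)⁻¹ - b⁻¹` one has `f x = x * exp (-∫ₓ¹ φ)` for `0 < x ≤ 1`. Near `0`,
`0 ≤ w b ≤ b ^ ν` gives `|φ b| ≤ -η * b ^ (ν - 2)`, integrable at `0` because `ν > 1`; so `φ` is
integrable on `(0, 1]` and `f x / x → exp (-∫₀¹ φ)`, which is the one-sided derivative at `0`.
-/

open Real Set Filter Topology MeasureTheory

lemma abs_inv_add_sub_inv_le {b c : ℝ} (hb : 0 < b) (hc : 0 ≤ c) :
    |(b + c)⁻¹ - b⁻¹| ≤ c / b ^ 2 := by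
  have hbc : 0 < b + c := by linarith
  rw [inv_sub_inv hbc.ne' hb.ne', abs_div, abs_of_nonpos (by linarith), abs_of_pos (by positivity),
    pow_two]
  gcongr
  · linarith
  · linarith

lemma integrableOn_Ioc_of_continuousOn_of_abs_le_rpow {g : ℝ → ℝ} {a δ C ν : ℝ}
    (hg : ContinuousOn g (Ioc 0 a)) (hν : 1 < ν) (hδ : 0 < δ)
    (hbound : ∀ x ∈ Ioc 0 δ, |g x| ≤ C * x ^ (ν - 2)) :
    IntegrableOn g (Ioc 0 a) := by
  have h_near : IntegrableOn g (Ioc 0 (min δ a)) := by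
    have hmaj : IntegrableOn (fun x => C * x ^ (ν - 2)) (Ioc 0 (min δ a)) :=
      ((intervalIntegral.intervalIntegrable_rpow' (by linarith)).1).const_mul C
    refine hmaj.mono' ((hg.mono (Ioc_subset_Ioc_right (min_le_right _ _))).aestronglyMeasurable
      measurableSet_Ioc) ((ae_restrict_iff' measurableSet_Ioc).mpr (.of_forall fun x hx => ?_))
    exact hbound x (Ioc_subset_Ioc_right (min_le_left _ _) hx)
  have h_far : IntegrableOn g (Icc δ a) :=
    (hg.mono fun x hx => ⟨hδ.trans_le hx.1, hx.2⟩).integrableOn_Icc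
  refine (h_near.union h_far).mono_set fun x hx => ?_
  rcases le_or_gt x δ with hxδ | hxδ
  · exact .inl ⟨hx.1, le_min hxδ hx.2⟩
  · exact .inr ⟨hxδ.le, hx.2⟩

lemma integrableOn_inv_sub_mul_sub_inv {η ν δ : ℝ} {w : ℝ → ℝ} (hη : η ≤ 0)
    (hwnn : ∀ x ∈ Ioc 0 1, 0 ≤ w x) (hw : ContinuousOn w (Ioc 0 1))
    (hν : 1 < ν) (hδ : 0 < δ) (hwν : ∀ x ∈ Ioc 0 δ, w x ≤ x ^ ν) :
    IntegrableOn (fun b => (b - η * w b)⁻¹ - b⁻¹) (Ioc 0 1) := by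
  have hden : ∀ b ∈ Ioc (0 : ℝ) 1, 0 < b - η * w b := fun b hb => by
    nlinarith [hb.1, hwnn b hb]
  have hcont : ContinuousOn (fun b => (b - η * w b)⁻¹ - b⁻¹) (Ioc 0 1) :=
    ((continuousOn_id.sub (continuousOn_const.mul hw)).inv₀ fun b hb => (hden b hb).ne').sub
      (continuousOn_inv₀.mono fun b hb => hb.1.ne')
  refine integrableOn_Ioc_of_continuousOn_of_abs_le_rpow (C := -η) hcont hν
    (lt_min hδ one_pos) fun b hb => ?_
  have hb1 : b ∈ Ioc (0 : ℝ) 1 := ⟨hb.1, hb.2.trans (min_le_right _ _)⟩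
  calc |(b - η * w b)⁻¹ - b⁻¹| = |(b + -η * w b)⁻¹ - b⁻¹| := by ring_nf
    _ ≤ -η * w b / b ^ 2 := abs_inv_add_sub_inv_le hb.1 (by nlinarith [hwnn b hb1])
    _ ≤ -η * b ^ ν / b ^ 2 := by
      gcongr
      · linarith
      · exact hwν b ⟨hb.1, hb.2.trans (min_le_left _ _)⟩
    _ = -η * b ^ (ν - 2) := by
      rw [rpow_sub hb.1, rpow_two, mul_div_assoc]

lemma integral_eq_neg_log_add_integral_sub_inv {g : ℝ → ℝ} {x : ℝ} (hx : 0 < x)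
    (hg : IntervalIntegrable (fun b => g b - b⁻¹) volume x 1) :
    ∫ b in x..1, g b = -log x + ∫ b in x..1, (g b - b⁻¹) := by
  have hinv : IntervalIntegrable (fun b : ℝ => b⁻¹) volume x 1 :=
    intervalIntegral.intervalIntegrable_inv (fun b hb => (lt_of_lt_of_le (lt_min hx one_pos)
      hb.1).ne') continuousOn_id
  rw [← log_inv, ← one_div, ← integral_inv_of_pos hx one_pos,
    ← intervalIntegral.integral_add hinv hg]
  simp only [add_sub_cancel]

lemma tendsto_intervalIntegral_nhdsGT {g : ℝ → ℝ} {a b : ℝ} (hab : a < b)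
    (hg : IntegrableOn g (Ioc a b)) :
    Tendsto (fun x => ∫ t in x..b, g t) (𝓝[>] a) (𝓝 (∫ t in a..b, g t)) := by
  have hcont := intervalIntegral.continuousOn_primitive_interval_left (μ := volume) (f := g)
    (a := a) (b := b) (by rwa [uIcc_of_le hab.le, integrableOn_Icc_iff_integrableOn_Ioc])
  rw [uIcc_of_le hab.le] at hcont
  exact ((hcont a (left_mem_Icc.2 hab.le)).mono Ioo_subset_Icc_self).tendsto.mono_left
    (nhdsWithin_le_of_mem (Ioo_mem_nhdsGT hab))

lemma hasDerivWithinAt_Ici_of_eventually_eq_mul {f h : ℝ → ℝ} {L : ℝ} (hf0 : f 0 = 0)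
    (hfh : ∀ᶠ x in 𝓝[>] 0, f x = x * h x) (hh : Tendsto h (𝓝[>] 0) (𝓝 L)) :
    HasDerivWithinAt f L (Ici 0) 0 := by
  rw [hasDerivWithinAt_iff_tendsto_slope, Ici_sdiff_left]
  refine hh.congr' ?_
  filter_upwards [hfh, self_mem_nhdsWithin] with x hx hx0
  rw [slope_def_field, hx, hf0, sub_zero, sub_zero, mul_div_cancel_left₀ _ (ne_of_gt hx0)]

theorem crushdown_f_deriv_zero_exists_general
    (η : ℝ) (hη : η < 0) (w : ℝ → ℝ)
    (hwnn : ∀ x ∈ Icc (0:ℝ) 1, 0 ≤ w x)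
    (hwC1 : ContDiffOn ℝ 1 w (Icc 0 1))
    (f : ℝ → ℝ)
    (hf : ∀ x : ℝ, f x = if x = 0 then 0
      else Real.exp (-(∫ b in x..1, (b - η * w b)⁻¹)))
    (hbound : ∃ ν : ℝ, 1 < ν ∧ ∃ δ : ℝ, 0 < δ ∧
      ∀ x ∈ Icc (0:ℝ) δ, w x ≤ x ^ ν) :
    ∃ L : ℝ, HasDerivWithinAt f L (Ici 0) 0 := by
  obtain ⟨ν, hν, δ, hδ, hwν⟩ := hbound
  have hφ : IntegrableOn (fun b => (b - η * w b)⁻¹ - b⁻¹) (Ioc 0 1) :=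
    integrableOn_inv_sub_mul_sub_inv hη.le (fun x hx => hwnn x (Ioc_subset_Icc_self hx))
      (hwC1.continuousOn.mono Ioc_subset_Icc_self) hν hδ
      (fun x hx => hwν x (Ioc_subset_Icc_self hx))
  refine ⟨exp (-∫ b in (0)..1, ((b - η * w b)⁻¹ - b⁻¹)),
    hasDerivWithinAt_Ici_of_eventually_eq_mul (by simp [hf]) ?_
      ((continuous_exp.tendsto _).comp (tendsto_intervalIntegral_nhdsGT one_pos hφ).neg)⟩
  filter_upwards [Ioo_mem_nhdsGT one_pos] with x hx
  have hφx : IntervalIntegrable (fun b => (b - η * w b)⁻¹ - b⁻¹) volume x 1 :=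
    (intervalIntegrable_iff_integrableOn_Ioc_of_le hx.2.le).2
      (hφ.mono_set (Ioc_subset_Ioc_left hx.1.le))
  rw [hf, if_neg hx.1.ne', integral_eq_neg_log_add_integral_sub_inv hx.1 hφx, neg_add, neg_neg,
    exp_add, exp_log hx.1]
  rfl

theorem crushdown_f_deriv_zero_exists
    (η : ℝ) (hη : η < 0) (w : ℝ → ℝ)
    (hw0 : w 0 = 0) (hw1 : w 1 = 1)
    (hwnn : ∀ x ∈ Icc (0:ℝ) 1, 0 ≤ w x)
    (hwC1 : ContDiffOn ℝ 1 w (Icc 0 1))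
    (hwmono : MonotoneOn w (Icc 0 1))
    (f : ℝ → ℝ)
    (hf : ∀ x : ℝ, f x = if x = 0 then 0
      else Real.exp (-(∫ b in x..1, (b - η * w b)⁻¹)))
    (hbound : ∃ ν : ℝ, 1 < ν ∧ ∃ δ : ℝ, 0 < δ ∧
      ∀ x ∈ Icc (0:ℝ) δ, w x ≤ x ^ ν) :
    ∃ L : ℝ, HasDerivWithinAt f L (Ici 0) 0 :=
  crushdown_f_deriv_zero_exists_general η hη w hwnn hwC1 f hf hbound
end

section
/- For any continuous concave function f : [0,1] → [0,1] with f(0) = 0, f(1) = 1, right derivative f'(0) = σ/(1-η) and f'(1) = 1/(1-η), where η ≤ 0 and σ = (1-η)·f'(0) ≥ 1, one has 1/2 ≤ ∫_0^1 f(x) dx ≤ √σ/(1 + √σ). -/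
/-!
By concavity, `f` lies above its chord `y = x` and below both of its one-sided tangent lines,
`y = σ x / (1 - η)` at `0` and `y = 1 + (x - 1) / (1 - η)` at `1`. Integrating the chord gives
`1 / 2`. For the upper bound, integrate the tangent at `0` over `[0, c]` and the tangent at `1`
over `[c, 1]` with `c = 1 / (1 + √σ)`: this split point makes the two `η`-dependent error terms
cancel, since `σ c² = (1 - c)²`, leaving exactly `1 - c = √σ / (1 + √σ)`.
-/

open Real Set

theorem ConcaveOn.le_add_mul_sub_of_hasDerivWithinAt {S : Set ℝ} {f : ℝ → ℝ} {x y f' : ℝ}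
    (hf : ConcaveOn ℝ S f) (hx : x ∈ S) (hy : y ∈ S) (hf' : HasDerivWithinAt f f' S x) :
    f y ≤ f x + f' * (y - x) := by
  rcases lt_trichotomy x y with hxy | rfl | hyx
  · have hslope := hf.slope_le_of_hasDerivWithinAt hx hy hxy hf'
    rw [slope_def_field, div_le_iff₀ (sub_pos.2 hxy)] at hslope
    linarith
  · simp
  · have hslope := hf.le_slope_of_hasDerivWithinAt hy hx hyx hf'
    rw [slope_def_field, le_div_iff₀ (sub_pos.2 hyx)] at hslope
    linarith

theorem ConcaveOn.one_sub_mul_add_mul_le {f : ℝ → ℝ} (hf : ConcaveOn ℝ (Icc 0 1) f) {x : ℝ}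
    (hx : x ∈ Icc (0 : ℝ) 1) : (1 - x) * f 0 + x * f 1 ≤ f x := by
  simpa using hf.2 (left_mem_Icc.2 zero_le_one) (right_mem_Icc.2 zero_le_one)
    (sub_nonneg.2 hx.2) hx.1 (sub_add_cancel 1 x)

theorem intervalIntegral.integral_le_add_of_le_of_le {f g h : ℝ → ℝ} {u c v : ℝ}
    (huc : u ≤ c) (hcv : c ≤ v) (hf : ContinuousOn f (Icc u v))
    (hg : IntervalIntegrable g MeasureTheory.volume u c)
    (hh : IntervalIntegrable h MeasureTheory.volume c v)
    (hfg : ∀ x ∈ Icc u c, f x ≤ g x) (hfh : ∀ x ∈ Icc c v, f x ≤ h x) :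
    ∫ x in u..v, f x ≤ (∫ x in u..c, g x) + ∫ x in c..v, h x := by
  have hfuc : IntervalIntegrable f MeasureTheory.volume u c :=
    (hf.mono (Icc_subset_Icc_right hcv)).intervalIntegrable_of_Icc huc
  have hfcv : IntervalIntegrable f MeasureTheory.volume c v :=
    (hf.mono (Icc_subset_Icc_left huc)).intervalIntegrable_of_Icc hcv
  rw [← intervalIntegral.integral_add_adjacent_intervals hfuc hfcv]
  exact add_le_add (intervalIntegral.integral_mono_on huc hfuc hg hfg)
    (intervalIntegral.integral_mono_on hcv hfcv hh hfh)

theorem integral_const_mul_id_zero (a c : ℝ) : ∫ x in (0 : ℝ)..c, a * x = a * c ^ 2 / 2 := by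
  rw [intervalIntegral.integral_const_mul, integral_id]
  ring

theorem integral_one_add_mul_sub_one (b c : ℝ) :
    ∫ x in c..1, (1 + b * (x - 1)) = (1 - c) - b * (1 - c) ^ 2 / 2 := by
  rw [intervalIntegral.integral_add (f := fun _ => 1) (g := fun x => b * (x - 1)) (by simp)
      ((by fun_prop : Continuous fun x : ℝ => b * (x - 1)).intervalIntegrable _ _),
    intervalIntegral.integral_const_mul, intervalIntegral.integral_comp_sub_right (fun x => x),
    integral_id, intervalIntegral.integral_const, smul_eq_mul]
  ring

theorem crushdown_integral_bounds_general
    (η σ : ℝ) (hσ : 1 ≤ σ)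
    (f : ℝ → ℝ)
    (hcont : ContinuousOn f (Icc 0 1))
    (hconc : ConcaveOn ℝ (Icc 0 1) f)
    (hf0 : f 0 = 0) (hf1 : f 1 = 1)
    (hderiv0 : HasDerivWithinAt f (σ / (1 - η)) (Ici 0) 0)
    (hderiv1 : HasDerivWithinAt f (1 / (1 - η)) (Iic 1) 1) :
    1 / 2 ≤ (∫ x in (0:ℝ)..1, f x) ∧
      (∫ x in (0:ℝ)..1, f x) ≤ Real.sqrt σ / (1 + Real.sqrt σ) := by
  have h0 : (0 : ℝ) ∈ Icc (0 : ℝ) 1 := left_mem_Icc.2 zero_le_one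
  have h1 : (1 : ℝ) ∈ Icc (0 : ℝ) 1 := right_mem_Icc.2 zero_le_one
  refine ⟨?_, ?_⟩
  · calc 1 / 2 = ∫ x in (0 : ℝ)..1, x := by norm_num [integral_id]
      _ ≤ ∫ x in (0 : ℝ)..1, f x :=
        intervalIntegral.integral_mono_on zero_le_one (continuous_id.intervalIntegrable _ _)
          (hcont.intervalIntegrable_of_Icc zero_le_one) fun x hx => by
            simpa [hf0, hf1] using hconc.one_sub_mul_add_mul_le hx
  set s := √σ
  have hs : 0 ≤ s := sqrt_nonneg σ
  set c := 1 / (1 + s)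
  have hc : c ∈ Icc (0 : ℝ) 1 := ⟨by positivity, div_le_one_of_le₀ (by linarith) (by positivity)⟩
  have hcompl : 1 - c = s / (1 + s) := by simp only [c]; field_simp; ring
  have hbalance : σ / (1 - η) * c ^ 2 = 1 / (1 - η) * (1 - c) ^ 2 := by
    rw [hcompl, ← sq_sqrt (zero_le_one.trans hσ)]
    ring
  calc ∫ x in (0 : ℝ)..1, f x
      ≤ (∫ x in (0 : ℝ)..c, σ / (1 - η) * x) + ∫ x in c..1, (1 + 1 / (1 - η) * (x - 1)) :=
        intervalIntegral.integral_le_add_of_le_of_le hc.1 hc.2 hcont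
          ((by fun_prop : Continuous fun x : ℝ => σ / (1 - η) * x).intervalIntegrable _ _)
          ((by fun_prop : Continuous fun x : ℝ => 1 + 1 / (1 - η) * (x - 1)).intervalIntegrable _ _)
          (fun x hx => by
            simpa [hf0] using hconc.le_add_mul_sub_of_hasDerivWithinAt h0
              (Icc_subset_Icc_right hc.2 hx) (hderiv0.mono Icc_subset_Ici_self))
          (fun x hx => by
            simpa [hf1] using hconc.le_add_mul_sub_of_hasDerivWithinAt h1
              (Icc_subset_Icc_left hc.1 hx) (hderiv1.mono Icc_subset_Iic_self))
    _ = s / (1 + s) := by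
        rw [integral_const_mul_id_zero, integral_one_add_mul_sub_one, ← hcompl]
        linear_combination hbalance / 2

theorem crushdown_integral_bounds
    (η σ : ℝ) (hη : η ≤ 0) (hσ : 1 ≤ σ)
    (f : ℝ → ℝ)
    (hcont : ContinuousOn f (Icc 0 1))
    (hconc : ConcaveOn ℝ (Icc 0 1) f)
    (hmaps : ∀ x ∈ Icc (0:ℝ) 1, f x ∈ Icc (0:ℝ) 1)
    (hf0 : f 0 = 0) (hf1 : f 1 = 1)
    (hderiv0 : HasDerivWithinAt f (σ / (1 - η)) (Ici 0) 0)
    (hderiv1 : HasDerivWithinAt f (1 / (1 - η)) (Iic 1) 1) :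
    1 / 2 ≤ (∫ x in (0:ℝ)..1, f x) ∧
      (∫ x in (0:ℝ)..1, f x) ≤ Real.sqrt σ / (1 + Real.sqrt σ) :=
  crushdown_integral_bounds_general η σ hσ f hcont hconc hf0 hf1 hderiv0 hderiv1
end

section
/- Under the same hypotheses, ∫_0^1 y·f̃(y) dy = (1/2)·(3·∫_0^1 f(x)² dx - 1). -/
open Set MeasureTheory intervalIntegral

/-!
Under `y = f x` the equation `f' (x + k x) = f x` turns `y * k (f⁻¹ y) dy` into
`(f² - x f f') dx`, and `x f f'` is the derivative of `x f² / 2` minus `f² / 2`.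
Equivalently, `F x = ∫_{f a}^{f x} y k (f⁻¹ y) dy + x f(x)² / 2` has derivative `(3/2) f²` on
`(a, b)`. The fundamental theorem of calculus for `F` needs `F` to be continuous only at the
endpoints, where `f'` may blow up, so no limiting argument is required.
-/

theorem IsCompact.continuousOn_image_of_leftInvOn {α β : Type*} [TopologicalSpace α]
    [TopologicalSpace β] [T2Space β] {f : α → β} {finv : β → α} {s : Set α} (hs : IsCompact s)
    (hf : ContinuousOn f s) (hinv : LeftInvOn finv f s) : ContinuousOn finv (f '' s) := by
  refine continuousOn_iff_isClosed.2 fun t ht => ⟨f '' (t ∩ s), ?_, ?_⟩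
  · exact ((hs.inter_left ht).image_of_continuousOn (hf.mono inter_subset_right)).isClosed
  · rw [inter_eq_self_of_subset_left (image_mono inter_subset_right), hinv.image_inter']

theorem HasDerivAt.integral_comp_of_continuousOn {G u : ℝ → ℝ} {c d x u' : ℝ}
    (hG : ContinuousOn G (Icc c d)) (hu : HasDerivAt u u' x) (hux : u x ∈ Ioo c d) :
    HasDerivAt (fun t => ∫ y in c..u t, G y) (G (u x) * u') x := by
  have hGx : ContinuousAt G (u x) := hG.continuousAt (Icc_mem_nhds hux.1 hux.2)
  have hint : IntervalIntegrable G volume c (u x) :=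
    (hG.mono (uIcc_subset_Icc (left_mem_Icc.2 (hux.1.trans hux.2).le)
      (Ioo_subset_Icc_self hux))).intervalIntegrable
  exact (integral_hasDerivAt_right hint
    ((hG.mono Ioo_subset_Icc_self).stronglyMeasurableAtFilter isOpen_Ioo _ hux) hGx).comp x hu

theorem integral_mul_comp_leftInvOn_of_deriv_mul_eq {f f' k finv : ℝ → ℝ} {a b : ℝ}
    (hab : a ≤ b) (hf : ContinuousOn f (Icc a b)) (hmono : StrictMonoOn f (Icc a b))
    (hk : ContinuousOn k (Icc a b)) (hinv : LeftInvOn finv f (Icc a b))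
    (hderiv : ∀ x ∈ Ioo a b, HasDerivAt f (f' x) x)
    (hode : ∀ x ∈ Ioo a b, f' x * (x + k x) = f x) :
    ∫ y in f a..f b, y * k (finv y) =
      3 / 2 * (∫ x in a..b, f x ^ 2) - (b * f b ^ 2 - a * f a ^ 2) / 2 := by
  have himage : f '' Icc a b = Icc (f a) (f b) := hf.image_Icc_of_monotoneOn hab hmono.monotoneOn
  have hfinv : ContinuousOn finv (Icc (f a) (f b)) :=
    himage ▸ isCompact_Icc.continuousOn_image_of_leftInvOn hf hinv
  have hmaps : MapsTo finv (Icc (f a) (f b)) (Icc a b) :=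
    himage ▸ fun _ ⟨x, hx, hfx⟩ => hfx ▸ (hinv hx).symm ▸ hx
  have hG : ContinuousOn (fun y => y * k (finv y)) (Icc (f a) (f b)) :=
    continuousOn_id.mul (hk.comp hfinv hmaps)
  have hprim : ContinuousOn (fun u => ∫ y in f a..u, y * k (finv y)) (Icc (f a) (f b)) := by
    have hfab : f a ≤ f b := hmono.monotoneOn (left_mem_Icc.2 hab) (right_mem_Icc.2 hab) hab
    have := continuousOn_primitive_interval (μ := volume) (uIcc_of_le hfab ▸ hG.integrableOn_Icc)
    rwa [uIcc_of_le hfab] at this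
  have hFTC := integral_eq_sub_of_hasDerivAt_of_le hab
    (f := fun x => (∫ y in f a..f x, y * k (finv y)) + x * f x ^ 2 / 2)
    (f' := fun x => 3 / 2 * f x ^ 2) ?_ ?_ ?_
  · simp only [integral_same, intervalIntegral.integral_const_mul] at hFTC
    linarith
  · exact (hprim.comp hf (himage ▸ mapsTo_image f _)).add
      ((continuousOn_id.mul (hf.pow 2)).div_const 2)
  · intro x hx
    have hfx : f x ∈ Ioo (f a) (f b) :=
      ⟨hmono (left_mem_Icc.2 hab) (Ioo_subset_Icc_self hx) hx.1,
        hmono (Ioo_subset_Icc_self hx) (right_mem_Icc.2 hab) hx.2⟩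
    refine (((hderiv x hx).integral_comp_of_continuousOn hG hfx).add
      (((hasDerivAt_id' x).fun_mul ((hderiv x hx).fun_pow 2)).div_const 2)).congr_deriv ?_
    rw [hinv (Ioo_subset_Icc_self hx)]
    linear_combination f x * hode x hx
  · exact ((hf.pow 2).const_mul _).intervalIntegrable_of_Icc hab

theorem crushdown_q1_identity_general
    (η : ℝ) (w : ℝ → ℝ)
    (hwcont : ContinuousOn w (Icc 0 1))
    (f finv : ℝ → ℝ)
    (hcont : ContinuousOn f (Icc 0 1))
    (hmono : StrictMonoOn f (Icc 0 1))
    (hf0 : f 0 = 0) (hf1 : f 1 = 1)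
    (hC1 : ∀ x ∈ Ioc (0:ℝ) 1, DifferentiableWithinAt ℝ f (Icc 0 1) x)
    (hODE : ∀ x ∈ Ioc (0:ℝ) 1,
      derivWithin f (Icc 0 1) x * (x - η * w x) = f x)
    (hinv : ∀ x ∈ Icc (0:ℝ) 1, finv (f x) = x) :
    (∫ y in (0:ℝ)..1, y * (-η * w (finv y))) =
      1 / 2 * (3 * (∫ x in (0:ℝ)..1, (f x) ^ 2) - 1) := by
  have hderiv (x : ℝ) (hx : x ∈ Ioo (0:ℝ) 1) :
      HasDerivAt f (derivWithin f (Icc 0 1) x) x :=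
    (hC1 x (Ioo_subset_Ioc_self hx)).hasDerivWithinAt.hasDerivAt (Icc_mem_nhds hx.1 hx.2)
  have key := integral_mul_comp_leftInvOn_of_deriv_mul_eq (k := fun x => -η * w x) zero_le_one
    hcont hmono (continuousOn_const.mul hwcont) hinv hderiv fun x hx => by
      rw [← hODE x (Ioo_subset_Ioc_self hx)]
      ring
  rw [hf0, hf1] at key
  rw [key]
  ring

theorem crushdown_q1_identity
    (η : ℝ) (hη : η < 0) (w : ℝ → ℝ)
    (hwcont : ContinuousOn w (Icc 0 1))
    (hwnn : ∀ x ∈ Icc (0:ℝ) 1, 0 ≤ w x)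
    (hw0 : w 0 = 0) (hw1 : w 1 = 1)
    (f finv : ℝ → ℝ)
    (hcont : ContinuousOn f (Icc 0 1))
    (hmono : StrictMonoOn f (Icc 0 1))
    (hf0 : f 0 = 0) (hf1 : f 1 = 1)
    (hC1 : ∀ x ∈ Ioc (0:ℝ) 1, DifferentiableWithinAt ℝ f (Icc 0 1) x)
    (hderivcont : ContinuousOn (fun x => derivWithin f (Icc 0 1) x) (Ioc 0 1))
    (hODE : ∀ x ∈ Ioc (0:ℝ) 1,
      derivWithin f (Icc 0 1) x * (x - η * w x) = f x)
    (hinv : ∀ x ∈ Icc (0:ℝ) 1, finv (f x) = x)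
    (hinv' : ∀ y ∈ Icc (0:ℝ) 1, f (finv y) = y) :
    (∫ y in (0:ℝ)..1, y * (-η * w (finv y))) =
      1 / 2 * (3 * (∫ x in (0:ℝ)..1, (f x) ^ 2) - 1) :=
  crushdown_q1_identity_general η w hwcont f finv hcont hmono hf0 hf1 hC1 hODE hinv
end

section
/- Let g : [0,1] → ℝ be a nonnegative, convex, continuous function with g(0) = 0 and g(1) = 1. Then ∫_0^1 g(y) dy ≤ (3/2)·∫_0^1 y·g(y) dy. -/
/-!
Convexity with `g 0 = 0` makes the slope `g y / y` nondecreasing, so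
`(t - y) * (y * g t - t * g y) ≥ 0` for all `y ∈ [0, 1]`. Integrating in `y` at `t = 2/3`,
where the term in `g t` integrates to zero, leaves `0 ≤ (2/3) ∫ y g(y) - (4/9) ∫ g`.
-/

open Set MeasureTheory intervalIntegral

theorem ConvexOn.mul_le_mul_of_map_zero {s : Set ℝ} {f : ℝ → ℝ} (hf : ConvexOn ℝ s f)
    (h0 : 0 ∈ s) (hf0 : f 0 = 0) {x y : ℝ} (hx : x ∈ s) (hy : 0 ≤ y) (hyx : y ≤ x) :
    x * f y ≤ y * f x := by
  rcases hy.eq_or_lt with rfl | hy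
  · simp [hf0]
  have hys : y ∈ s := hf.1.ordConnected.out h0 hx ⟨hy.le, hyx⟩
  have hslope := hf.secant_mono h0 hys hx hy.ne' (hy.trans_le hyx).ne' hyx
  simp only [hf0, sub_zero] at hslope
  rw [div_le_div_iff₀ hy (hy.trans_le hyx)] at hslope
  linarith

theorem ConvexOn.sub_mul_sub_mul_nonneg_of_map_zero {s : Set ℝ} {f : ℝ → ℝ}
    (hf : ConvexOn ℝ s f) (h0 : 0 ∈ s) (hf0 : f 0 = 0) {x y : ℝ} (hx : x ∈ s) (hy : y ∈ s)
    (hx0 : 0 ≤ x) (hy0 : 0 ≤ y) : 0 ≤ (x - y) * (y * f x - x * f y) := by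
  rcases le_total y x with hyx | hxy
  · exact mul_nonneg (sub_nonneg.2 hyx)
      (sub_nonneg.2 (hf.mul_le_mul_of_map_zero h0 hf0 hx hy0 hyx))
  · exact mul_nonneg_of_nonpos_of_nonpos (sub_nonpos.2 hxy)
      (sub_nonpos.2 (hf.mul_le_mul_of_map_zero h0 hf0 hy hx0 hxy))

theorem integral_sub_mul_sub_mul {g : ℝ → ℝ} (hg : IntervalIntegrable g volume 0 1) (t c : ℝ) :
    ∫ y in (0:ℝ)..1, (t - y) * (y * c - t * g y)
      = c * (t / 2 - 1 / 3) - t ^ 2 * (∫ y in (0:ℝ)..1, g y) + t * ∫ y in (0:ℝ)..1, y * g y := by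
  have hyg : IntervalIntegrable (fun y => y * g y) volume 0 1 :=
    hg.continuousOn_mul continuousOn_id
  have hexpand : ∀ y, (t - y) * (y * c - t * g y)
      = (c * t * y - c * y ^ 2) + (-t ^ 2 * g y + t * (y * g y)) := fun y => by ring
  simp_rw [hexpand]
  rw [integral_add (Continuous.intervalIntegrable (by fun_prop) _ _)
      ((hg.const_mul _).add (hyg.const_mul _)),
    integral_sub (Continuous.intervalIntegrable (by fun_prop) _ _)
      (Continuous.intervalIntegrable (by fun_prop) _ _),
    integral_add (hg.const_mul _) (hyg.const_mul _)]
  simp only [intervalIntegral.integral_const_mul, integral_pow]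
  rw [intervalIntegral.integral_const_mul, integral_id]
  ring

theorem crushdown_gamma_bound_general
    (g : ℝ → ℝ)
    (hconv : ConvexOn ℝ (Icc 0 1) g)
    (hcont : ContinuousOn g (Icc 0 1))
    (hg0 : g 0 = 0) :
    (∫ y in (0:ℝ)..1, g y) ≤ 3 / 2 * ∫ y in (0:ℝ)..1, y * g y := by
  have hint : IntervalIntegrable g volume 0 1 :=
    hcont.intervalIntegrable_of_Icc zero_le_one
  have hmem : (2 / 3 : ℝ) ∈ Icc (0:ℝ) 1 := by norm_num
  have hkernel : 0 ≤ ∫ y in (0:ℝ)..1, (2 / 3 - y) * (y * g (2 / 3) - 2 / 3 * g y) :=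
    integral_nonneg zero_le_one fun y hy =>
      hconv.sub_mul_sub_mul_nonneg_of_map_zero (left_mem_Icc.2 zero_le_one) hg0 hmem hy
        hmem.1 hy.1
  rw [integral_sub_mul_sub_mul hint] at hkernel
  linarith

theorem crushdown_gamma_bound
    (g : ℝ → ℝ)
    (hgnn : ∀ y ∈ Icc (0:ℝ) 1, 0 ≤ g y)
    (hconv : ConvexOn ℝ (Icc 0 1) g)
    (hcont : ContinuousOn g (Icc 0 1))
    (hg0 : g 0 = 0) (hg1 : g 1 = 1) :
    (∫ y in (0:ℝ)..1, g y) ≤ 3 / 2 * ∫ y in (0:ℝ)..1, y * g y :=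
  crushdown_gamma_bound_general g hconv hcont hg0
end

section
/- Let g : [0,1] → ℝ be nonnegative, convex, continuous with g(0) = 0, and fix z₀ < z₁. The function g_#(z) := ∫_{(z₁-z₀)/(z-z₀)}^1 g(y) dy, defined for z ≥ z₁ (and 0 for z < z₁), is nonnegative, monotonically increasing, continuous, concave on [z₁, ∞), has right derivative g_#'(z₁) = g(1)/(z₁ - z₀), and g_#(z) → ∫_0^1 g(y) dy as z → ∞. -/
/-!
Write `G t = ∫ y in t..1, g y` and `a z = (z₁ - z₀) / (max z z₁ - z₀)`, so that `g_# = G ∘ a`,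
where `a` is continuous, antitone, takes values in `(0, 1]` and tends to `0`. Since `g ≥ 0` is
continuous, `G` is antitone, nonnegative and continuous on `[0, 1]`; this gives everything except
concavity and the derivative. For `z ≥ z₁` the chain rule gives `g_#'(z) = g(a) a² / (z₁ - z₀)`
with `a = a z`. Convexity and `g 0 = 0` make `g t / t` nondecreasing, hence `g t * t²`
nondecreasing; as `a` decreases in `z`, `g_#'` is antitone, so `g_#` is concave. At `z = z₁`,
`a = 1` and the derivative is `g 1 / (z₁ - z₀)`.
-/

open Set Filter Topology MeasureTheory

theorem ConvexOn.monotoneOn_mul_sq {s : Set ℝ} {f : ℝ → ℝ} (hf : ConvexOn ℝ s f)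
    (h0 : 0 ∈ s) (hf0 : f 0 = 0) (hnn : ∀ x ∈ s, 0 ≤ f x) :
    MonotoneOn (fun x => f x * x ^ 2) (s ∩ Ioi 0) := by
  rintro x ⟨hxs, hx⟩ y ⟨hys, hy⟩ hxy
  have hslope : f x / x ≤ f y / y := by
    simpa [hf0] using hf.secant_mono h0 hxs hys hx.ne' hy.ne' hxy
  calc f x * x ^ 2 = f x / x * x ^ 3 := by field_simp
    _ ≤ f y / y * y ^ 3 :=
      mul_le_mul hslope (pow_le_pow_left₀ hx.le hxy 3) (pow_pos hx 3).le
        (div_nonneg (hnn y hys) hy.le)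
    _ = f y * y ^ 2 := by field_simp

section TailIntegral

variable {f : ℝ → ℝ} {a b : ℝ}

theorem antitoneOn_integral_left (hf : IntegrableOn f (Icc a b))
    (hnn : ∀ x ∈ Icc a b, 0 ≤ f x) : AntitoneOn (fun t => ∫ x in t..b, f x) (Icc a b) := by
  intro s hs t ht hst
  refine intervalIntegral.integral_mono_interval hst ht.2 le_rfl ?_
    (hf.mono_set (uIcc_subset_Icc hs (right_mem_Icc.2 (hs.1.trans hs.2)))).intervalIntegrable
  exact (ae_restrict_iff' measurableSet_Ioc).2
    (Eventually.of_forall fun x hx => hnn x ⟨hs.1.trans hx.1.le, hx.2⟩)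

theorem continuousOn_integral_left_Icc (hf : IntegrableOn f (Icc a b)) (hab : a ≤ b) :
    ContinuousOn (fun t => ∫ x in t..b, f x) (Icc a b) := by
  rw [← uIcc_of_le hab] at hf ⊢
  exact intervalIntegral.continuousOn_primitive_interval_left hf

theorem hasDerivWithinAt_integral_left_Icc (hf : ContinuousOn f (Icc a b)) {t : ℝ}
    (ht : t ∈ Icc a b) :
    HasDerivWithinAt (fun u => ∫ x in u..b, f x) (-f t) (Icc a b) t := by
  have : Fact (t ∈ Icc a b) := ⟨ht⟩
  exact intervalIntegral.integral_hasDerivWithinAt_left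
    (hf.mono (uIcc_subset_Icc ht (right_mem_Icc.2 (ht.1.trans ht.2)))).intervalIntegrable
    (hf.stronglyMeasurableAtFilter_nhdsWithin measurableSet_Icc t) (hf t ht)

end TailIntegral

/-- The lower limit of integration in `g_#`, frozen at its value `1` for `z < z₁`, so that
`g_#` is `t ↦ ∫ y in t..1, g y` composed with it on all of `ℝ`. -/
noncomputable def crushdownArg (z₀ z₁ z : ℝ) : ℝ := (z₁ - z₀) / (max z z₁ - z₀)

section CrushdownArg

variable {z₀ z₁ z : ℝ}

theorem crushdownArg_of_le (h : z₁ ≤ z) : crushdownArg z₀ z₁ z = (z₁ - z₀) / (z - z₀) := by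
  rw [crushdownArg, max_eq_left h]

theorem crushdownArg_eq_one (hz : z₀ < z₁) (h : z ≤ z₁) : crushdownArg z₀ z₁ z = 1 := by
  rw [crushdownArg, max_eq_right h, div_self (sub_pos.2 hz).ne']

theorem crushdownArg_mem_Ioc (hz : z₀ < z₁) (z : ℝ) : crushdownArg z₀ z₁ z ∈ Ioc 0 1 := by
  have hle : z₁ - z₀ ≤ max z z₁ - z₀ := sub_le_sub_right (le_max_right z z₁) z₀
  have hΔ : 0 < z₁ - z₀ := sub_pos.2 hz
  exact ⟨div_pos hΔ (hΔ.trans_le hle), div_le_one_of_le₀ hle (hΔ.trans_le hle).le⟩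

theorem crushdownArg_mem_Icc (hz : z₀ < z₁) (z : ℝ) : crushdownArg z₀ z₁ z ∈ Icc 0 1 :=
  Ioc_subset_Icc_self (crushdownArg_mem_Ioc hz z)

theorem continuous_crushdownArg (hz : z₀ < z₁) : Continuous (crushdownArg z₀ z₁) :=
  continuous_const.div ((continuous_id.max continuous_const).sub continuous_const)
    fun z => (sub_pos.2 (hz.trans_le (le_max_right z z₁))).ne'

theorem antitone_crushdownArg (hz : z₀ < z₁) : Antitone (crushdownArg z₀ z₁) :=
  fun a _ hab =>
    div_le_div_of_nonneg_left (sub_pos.2 hz).le (sub_pos.2 (hz.trans_le (le_max_right a z₁)))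
      (sub_le_sub_right (max_le_max hab le_rfl) z₀)

theorem tendsto_crushdownArg_atTop : Tendsto (crushdownArg z₀ z₁) atTop (𝓝 0) :=
  tendsto_const_nhds.div_atTop <| tendsto_atTop_add_const_right _ _ <|
    tendsto_atTop_mono (le_max_left · z₁) tendsto_id

theorem hasDerivWithinAt_crushdownArg (hz : z₀ < z₁) (h : z₁ ≤ z) :
    HasDerivWithinAt (crushdownArg z₀ z₁) (-crushdownArg z₀ z₁ z ^ 2 / (z₁ - z₀))
      (Ici z₁) z := by
  have hz' : z - z₀ ≠ 0 := (sub_pos.2 (hz.trans_le h)).ne'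
  have hd := (hasDerivAt_const z (z₁ - z₀)).div ((hasDerivAt_id z).sub_const z₀) hz'
  refine (hd.hasDerivWithinAt.congr (fun w hw => crushdownArg_of_le hw)
    (crushdownArg_of_le h)).congr_deriv ?_
  rw [crushdownArg_of_le h, id]
  field_simp
  ring

end CrushdownArg

section Crushdown

variable {g : ℝ → ℝ} {z₀ z₁ : ℝ}

theorem continuous_integral_crushdownArg (hg : ContinuousOn g (Icc 0 1)) (hz : z₀ < z₁) :
    Continuous fun z => ∫ y in crushdownArg z₀ z₁ z..1, g y :=
  (continuousOn_integral_left_Icc hg.integrableOn_Icc zero_le_one).comp_continuous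
    (continuous_crushdownArg hz) (crushdownArg_mem_Icc hz)

theorem hasDerivWithinAt_integral_crushdownArg (hg : ContinuousOn g (Icc 0 1))
    (hz : z₀ < z₁) {z : ℝ} (h : z₁ ≤ z) :
    HasDerivWithinAt (fun w => ∫ y in crushdownArg z₀ z₁ w..1, g y)
      (g (crushdownArg z₀ z₁ z) * crushdownArg z₀ z₁ z ^ 2 / (z₁ - z₀)) (Ici z₁) z := by
  have hmaps : MapsTo (crushdownArg z₀ z₁) (Ici z₁) (Icc 0 1) := fun w _ =>
    crushdownArg_mem_Icc hz w
  refine ((hasDerivWithinAt_integral_left_Icc hg (hmaps h)).comp z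
    (hasDerivWithinAt_crushdownArg hz h) hmaps).congr_deriv ?_
  ring

theorem concaveOn_integral_crushdownArg (hconv : ConvexOn ℝ (Icc 0 1) g) (hg0 : g 0 = 0)
    (hnn : ∀ y ∈ Icc (0:ℝ) 1, 0 ≤ g y) (hcont : ContinuousOn g (Icc 0 1)) (hz : z₀ < z₁) :
    ConcaveOn ℝ (Ici z₁) fun z => ∫ y in crushdownArg z₀ z₁ z..1, g y := by
  have hderiv : ∀ z ∈ Ioi z₁, HasDerivAt (fun w => ∫ y in crushdownArg z₀ z₁ w..1, g y)
      (g (crushdownArg z₀ z₁ z) * crushdownArg z₀ z₁ z ^ 2 / (z₁ - z₀)) z := fun z hz₁ =>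
    (hasDerivWithinAt_integral_crushdownArg hcont hz hz₁.le).hasDerivAt (Ici_mem_nhds hz₁)
  have hmem : ∀ z, crushdownArg z₀ z₁ z ∈ Icc 0 1 ∩ Ioi 0 := fun z =>
    ⟨crushdownArg_mem_Icc hz z, (crushdownArg_mem_Ioc hz z).1⟩
  refine AntitoneOn.concaveOn_of_deriv (convex_Ici z₁)
    (continuous_integral_crushdownArg hcont hz).continuousOn ?_ ?_ <;> rw [interior_Ici]
  · exact fun z hz => (hderiv z hz).differentiableAt.differentiableWithinAt
  · intro a ha b hb hab
    rw [(hderiv a ha).deriv, (hderiv b hb).deriv]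
    exact div_le_div_of_nonneg_right (hconv.monotoneOn_mul_sq ⟨le_rfl, zero_le_one⟩ hg0 hnn
      (hmem b) (hmem a) (antitone_crushdownArg hz hab)) (sub_pos.2 hz).le

end Crushdown

theorem crushdown_gsharp_properties
    (g : ℝ → ℝ)
    (hgnn : ∀ y ∈ Icc (0:ℝ) 1, 0 ≤ g y)
    (hconv : ConvexOn ℝ (Icc 0 1) g)
    (hcont : ContinuousOn g (Icc 0 1))
    (hg0 : g 0 = 0)
    (z₀ z₁ : ℝ) (hz : z₀ < z₁)
    (gsh : ℝ → ℝ)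
    (hgsh : ∀ z : ℝ, gsh z =
      if z < z₁ then 0 else ∫ y in ((z₁ - z₀) / (z - z₀))..1, g y) :
    (∀ z : ℝ, 0 ≤ gsh z) ∧
    Monotone gsh ∧
    Continuous gsh ∧
    ConcaveOn ℝ (Ici z₁) gsh ∧
    HasDerivWithinAt gsh (g 1 / (z₁ - z₀)) (Ici z₁) z₁ ∧
    Filter.Tendsto gsh Filter.atTop (nhds (∫ y in (0:ℝ)..1, g y)) := by
  obtain rfl : gsh = fun z => ∫ y in crushdownArg z₀ z₁ z..1, g y := by
    funext z
    rw [hgsh]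
    split_ifs with h
    · rw [crushdownArg_eq_one hz h.le, intervalIntegral.integral_same]
    · rw [crushdownArg_of_le (not_lt.1 h)]
  have hmem := crushdownArg_mem_Icc hz
  have hanti := antitoneOn_integral_left hcont.integrableOn_Icc hgnn
  refine ⟨fun z => ?_, fun a b hab => hanti (hmem b) (hmem a) (antitone_crushdownArg hz hab),
    continuous_integral_crushdownArg hcont hz,
    concaveOn_integral_crushdownArg hconv hg0 hgnn hcont hz, ?_, ?_⟩
  · simpa using hanti (hmem z) ⟨zero_le_one, le_rfl⟩ (hmem z).2
  · simpa [crushdownArg_eq_one hz le_rfl] using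
      hasDerivWithinAt_integral_crushdownArg hcont hz le_rfl
  · exact (continuousOn_integral_left_Icc hcont.integrableOn_Icc zero_le_one 0
      ⟨le_rfl, zero_le_one⟩).tendsto.comp
      (tendsto_nhdsWithin_iff.2 ⟨tendsto_crushdownArg_atTop, Eventually.of_forall hmem⟩)
end

section
/- With g_# as above and g convex nonnegative with g(0)=0, g(1) ≤ σ - 1 (σ > 1), one has g_#(z) ≤ g₊(z) := min{ (z - z₁)/(z₁ - z₀)·(σ-1), ∫_0^1 g } for all z ≥ z₁. -/
/-!
Since `g` is convex with `g 0 = 0 ≤ g 1`, it is bounded by `g 1 ≤ σ - 1` on `[0, 1]`.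
With `a = (z₁ - z₀) / (z - z₀) ∈ (0, 1]`, integrating this bound over `[a, 1]` gives
`g_#(z) ≤ (1 - a) (σ - 1) ≤ (z - z₁) / (z₁ - z₀) · (σ - 1)`, while `g ≥ 0` gives
`g_#(z) ≤ ∫₀¹ g`.
-/

open Real Set MeasureTheory

lemma ConvexOn.le_right_of_mem_Icc {f : ℝ → ℝ} {a b y : ℝ} (hf : ConvexOn ℝ (Icc a b) f)
    (hfab : f a ≤ f b) (hy : y ∈ Icc a b) : f y ≤ f b := by
  have hab : a ≤ b := hy.1.trans hy.2
  have hseg : y ∈ segment ℝ a b := by rwa [segment_eq_Icc hab]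
  simpa [hfab] using hf.le_on_segment (left_mem_Icc.2 hab) (right_mem_Icc.2 hab) hseg

lemma intervalIntegral.integral_le_sub_mul_of_le {f : ℝ → ℝ} {a b C : ℝ} (hab : a ≤ b)
    (hf : IntervalIntegrable f volume a b) (h : ∀ x ∈ Icc a b, f x ≤ C) :
    ∫ x in a..b, f x ≤ (b - a) * C := by
  calc ∫ x in a..b, f x ≤ ∫ _ in a..b, C := integral_mono_on hab hf intervalIntegrable_const h
    _ = (b - a) * C := by rw [integral_const, smul_eq_mul]

lemma one_sub_div_sub_le_div_sub {z₀ z₁ z : ℝ} (hz : z₀ < z₁) (hz₁ : z₁ ≤ z) :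
    1 - (z₁ - z₀) / (z - z₀) ≤ (z - z₁) / (z₁ - z₀) := by
  have hz₀ : 0 < z - z₀ := by linarith
  rw [one_sub_div hz₀.ne', sub_sub_sub_cancel_right]
  exact div_le_div_of_nonneg_left (by linarith) (by linarith) (by linarith)

theorem crushdown_gsharp_upper_bound_general
    (σ : ℝ)
    (g : ℝ → ℝ)
    (hgnn : ∀ y ∈ Icc (0:ℝ) 1, 0 ≤ g y)
    (hconv : ConvexOn ℝ (Icc 0 1) g)
    (hcont : ContinuousOn g (Icc 0 1))
    (hg0 : g 0 = 0) (hg1 : g 1 ≤ σ - 1)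
    (z₀ z₁ : ℝ) (hz : z₀ < z₁)
    (gsh : ℝ → ℝ)
    (hgsh : ∀ z : ℝ, z₁ ≤ z →
      gsh z = ∫ y in ((z₁ - z₀) / (z - z₀))..1, g y) :
    ∀ z : ℝ, z₁ ≤ z →
      gsh z ≤ min ((z - z₁) / (z₁ - z₀) * (σ - 1)) (∫ y in (0:ℝ)..1, g y) := by
  intro z hz₁
  rw [hgsh z hz₁]
  set a := (z₁ - z₀) / (z - z₀)
  have ha₀ : 0 < a := div_pos (by linarith) (by linarith)
  have ha₁ : a ≤ 1 := (div_le_one (by linarith)).2 (by linarith)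
  have hg1nn : 0 ≤ g 1 := hgnn 1 (right_mem_Icc.2 zero_le_one)
  have hint : IntervalIntegrable g volume 0 1 := hcont.intervalIntegrable_of_Icc zero_le_one
  have hle : ∀ y ∈ Icc a 1, g y ≤ g 1 := fun y hy ↦
    hconv.le_right_of_mem_Icc (by rwa [hg0]) ⟨ha₀.le.trans hy.1, hy.2⟩
  refine le_min ?_ ?_
  · calc ∫ y in a..1, g y ≤ (1 - a) * g 1 :=
          intervalIntegral.integral_le_sub_mul_of_le ha₁
            (hint.mono_set (uIcc_subset_uIcc (mem_uIcc_of_le ha₀.le ha₁) right_mem_uIcc)) hle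
      _ ≤ (z - z₁) / (z₁ - z₀) * g 1 :=
          mul_le_mul_of_nonneg_right (one_sub_div_sub_le_div_sub hz hz₁) hg1nn
      _ ≤ (z - z₁) / (z₁ - z₀) * (σ - 1) :=
          mul_le_mul_of_nonneg_left hg1 (div_nonneg (by linarith) (by linarith))
  · refine intervalIntegral.integral_mono_interval ha₀.le ha₁ le_rfl ?_ hint
    filter_upwards [ae_restrict_mem measurableSet_Ioc] with y hy using
      hgnn y (Ioc_subset_Icc_self hy)

theorem crushdown_gsharp_upper_bound
    (σ : ℝ) (hσ : 1 < σ)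
    (g : ℝ → ℝ)
    (hgnn : ∀ y ∈ Icc (0:ℝ) 1, 0 ≤ g y)
    (hconv : ConvexOn ℝ (Icc 0 1) g)
    (hcont : ContinuousOn g (Icc 0 1))
    (hg0 : g 0 = 0) (hg1 : g 1 ≤ σ - 1)
    (z₀ z₁ : ℝ) (hz : z₀ < z₁)
    (gsh : ℝ → ℝ)
    (hgsh : ∀ z : ℝ, z₁ ≤ z →
      gsh z = ∫ y in ((z₁ - z₀) / (z - z₀))..1, g y) :
    ∀ z : ℝ, z₁ ≤ z →
      gsh z ≤ min ((z - z₁) / (z₁ - z₀) * (σ - 1)) (∫ y in (0:ℝ)..1, g y) :=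
  crushdown_gsharp_upper_bound_general σ g hgnn hconv hcont hg0 hg1 z₀ z₁ hz gsh hgsh
end
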